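/- arXiv:2605.06674 — 6 statements merged into one kernel-verified Lean document; each statement's English description precedes it below -/
import Mathlib

section
/- Let R be a commutative ring, let r be a positive integer, and let L be a unit of R such that L^i − 1 is a unit of R for every positive integer i. Let B ⊆ ℤ^r be a finite set and let c_b ∈ R for each b ∈ B. If Σ_{b∈B} c_b · L^{b·n} = 0 in R for every n ∈ ℕ^r, where b·n = b_1 n_1 + ⋯ + b_r n_r, then c_b = 0 for every b ∈ B. -/
lemma unit_sub_one {R : Type*} [CommRing R] (L : Rˣ)
    (hL : ∀ i : ℕ, 0 < i → IsUnit ((L : R) ^ i - 1)) :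
    ∀ m : ℤ, m ≠ 0 → IsUnit (((L ^ m : Rˣ) : R) - 1) := by
  have hpos : ∀ k : ℕ, 0 < k → IsUnit (((L ^ (k : ℤ) : Rˣ) : R) - 1) := by
    intro k hk
    have : ((L ^ (k : ℤ) : Rˣ) : R) = (L : R) ^ k := by
      rw [zpow_natCast]; push_cast; ring
    rw [this]; exact hL k hk
  intro m hm
  rcases lt_or_gt_of_ne hm with h | h
  · have hk : 0 < (-m).toNat := by omega
    have h1 : IsUnit (((L ^ (((-m).toNat : ℤ)) : Rˣ) : R) - 1) := hpos _ hk
    have key : ((L ^ m : Rˣ) : R) - 1 =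
        -(((L ^ m : Rˣ) : R) * (((L ^ (((-m).toNat : ℤ)) : Rˣ) : R) - 1)) := by
      have : ((L ^ m : Rˣ) : R) * ((L ^ (((-m).toNat : ℤ)) : Rˣ) : R) = 1 := by
        rw [← Units.val_mul, ← zpow_add]
        have : m + ((-m).toNat : ℤ) = 0 := by omega
        rw [this, zpow_zero, Units.val_one]
      linear_combination this
    rw [key]
    exact ((L ^ m).isUnit.mul h1).neg
  · have hk : 0 < m.toNat := by omega
    have := hpos m.toNat hk
    rwa [Int.toNat_of_nonneg (le_of_lt h)] at this

lemma unit_sub {R : Type*} [CommRing R] (L : Rˣ)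
    (hL : ∀ i : ℕ, 0 < i → IsUnit ((L : R) ^ i - 1)) (a b : ℤ) (hab : a ≠ b) :
    IsUnit (((L ^ a : Rˣ) : R) - ((L ^ b : Rˣ) : R)) := by
  have key : ((L ^ a : Rˣ) : R) - ((L ^ b : Rˣ) : R)
      = ((L ^ b : Rˣ) : R) * (((L ^ (a - b) : Rˣ) : R) - 1) := by
    rw [mul_sub, mul_one, ← Units.val_mul, ← zpow_add]
    ring_nf
  rw [key]
  exact (L ^ b).isUnit.mul (unit_sub_one L hL (a - b) (sub_ne_zero.mpr hab))

lemma key_lemma {R : Type*} [CommRing R] {r : ℕ} (L : Rˣ)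
    (hL : ∀ i : ℕ, 0 < i → IsUnit ((L : R) ^ i - 1)) :
    ∀ (S : Finset (Fin r → ℤ)) (c : (Fin r → ℤ) → R),
    (∀ n : Fin r → ℕ,
      ∑ b ∈ S, c b * ((L ^ (∑ i, b i * (n i : ℤ)) : Rˣ) : R) = 0) →
    ∀ b0 ∈ S, c b0 = 0 := by
  intro S
  induction S using Finset.strongInduction with
  | _ S ih =>
    intro c hf b0 hb0
    by_cases hsing : ∀ b ∈ S, b = b0
    · have hS : S = {b0} := by
        apply Finset.eq_singleton_iff_unique_mem.mpr
        exact ⟨hb0, hsing⟩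
      have h0 := hf (fun _ => 0)
      rw [hS] at h0
      simp at h0
      convert h0 using 2
    · push_neg at hsing
      obtain ⟨b1, hb1, hb1ne⟩ := hsing
      have : ∃ i, b0 i ≠ b1 i := by
        by_contra h
        push_neg at h
        exact hb1ne (funext fun i => (h i).symm)
      obtain ⟨i, hi⟩ := this
      set c' : (Fin r → ℤ) → R :=
        fun b => c b * (((L ^ (b i) : Rˣ) : R) - ((L ^ (b1 i) : Rˣ) : R)) with hc'
      have hsub : S.erase b1 ⊂ S := Finset.erase_ssubset hb1
      have hf' : ∀ n : Fin r → ℕ,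
          ∑ b ∈ S.erase b1, c' b * ((L ^ (∑ i, b i * (n i : ℤ)) : Rˣ) : R) = 0 := by
        intro n
        have hzero : c' b1 = 0 := by simp [hc']
        have hfull : ∑ b ∈ S.erase b1, c' b * ((L ^ (∑ i, b i * (n i : ℤ)) : Rˣ) : R)
            = ∑ b ∈ S, c' b * ((L ^ (∑ i, b i * (n i : ℤ)) : Rˣ) : R) := by
          rw [← Finset.sum_erase_add S _ hb1, hzero, zero_mul, add_zero]
        rw [hfull]
        set n' : Fin r → ℕ := fun j => if j = i then n j + 1 else n j with hn'
        have hdots : ∀ b : Fin r → ℤ,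
            (∑ j, b j * (n' j : ℤ)) = (∑ j, b j * (n j : ℤ)) + b i := by
          intro b
          have : ∀ j, b j * (n' j : ℤ) = b j * (n j : ℤ) + if j = i then b j else 0 := by
            intro j
            by_cases hj : j = i <;> simp [hn', hj] <;> ring
          rw [Finset.sum_congr rfl (fun j _ => this j), Finset.sum_add_distrib,
            Finset.sum_ite_eq' Finset.univ i b]
          simp
        have h1 := hf n'
        have h2 := hf n
        calc ∑ b ∈ S, c' b * ((L ^ (∑ i, b i * (n i : ℤ)) : Rˣ) : R)
            = (∑ b ∈ S, c b * ((L ^ (∑ j, b j * (n' j : ℤ)) : Rˣ) : R))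
              - ((L ^ (b1 i) : Rˣ) : R) *
                (∑ b ∈ S, c b * ((L ^ (∑ j, b j * (n j : ℤ)) : Rˣ) : R)) := by
              rw [Finset.mul_sum, ← Finset.sum_sub_distrib]
              apply Finset.sum_congr rfl
              intro b _
              rw [hdots b, zpow_add, Units.val_mul]
              simp only [hc']
              ring
          _ = 0 := by rw [h1, h2]; ring
      have := ih (S.erase b1) hsub c' hf' b0 (Finset.mem_erase.mpr ⟨hb1ne.symm, hb0⟩)
      simp only [hc'] at this
      have hu := unit_sub L hL (b0 i) (b1 i) hi
      obtain ⟨u, hu⟩ := hu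
      have := congrArg (· * ((u⁻¹ : Rˣ) : R)) this
      simp only [zero_mul, mul_assoc, ← hu] at this
      simpa [Units.mul_inv] using this

/-- Several-variable version: if `∑ b ∈ B, c b * L^(b·n) = 0` for every `n ∈ ℕ^r`, then
all coefficients vanish. -/
theorem stmt1 {R : Type*} [CommRing R] (r : ℕ) (hr : 0 < r) (L : Rˣ)
    (hL : ∀ i : ℕ, 0 < i → IsUnit ((L : R) ^ i - 1))
    (B : Finset (Fin r → ℤ)) (c : (Fin r → ℤ) → R)
    (hf : ∀ n : Fin r → ℕ,
      ∑ b ∈ B, c b * ((L ^ (∑ i, b i * (n i : ℤ)) : Rˣ) : R) = 0) :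
    ∀ b ∈ B, c b = 0 := by
  exact key_lemma L hL B c hf
end

section
/- Let R be a commutative ring, let r be a positive integer, and let L be a unit of R such that L^i − 1 is a unit of R for every positive integer i. Let S ⊆ ℕ^r × ℤ^r be a finite set and let c_{a,b} ∈ R for each (a,b) ∈ S. Suppose that for every n ∈ ℕ^r the element f(n) = Σ_{(a,b)∈S} c_{a,b} · n^a · L^{b·n} is torsion in R (i.e., there is a nonzero integer N, possibly depending on n, with N·f(n) = 0), where n^a = n_1^{a_1}⋯n_r^{a_r} and b·n = b_1 n_1 + ⋯ + b_r n_r. Then c_{a,b} is torsion in R for every (a,b) ∈ S. -/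
/-!
Reduce modulo torsion: in `R ⊗ ℚ`, realised as the localization inverting the nonzero integers,
the torsion elements of `R` are exactly those mapping to `0`, so the claim becomes the linear
independence of the functions `n ↦ n^a L^(b·n)`. Since products of independent families of
functions are independent, induction on `r` reduces this to one variable. There, grouping by `b`
gives an exponential polynomial `∑_b P_b(n) μ_b^n` with `μ_b = L^b`. Applying
`(shift - μ_{b₀})^(deg P_{b₀} + 1)` kills the `b₀` term and acts injectively on the others because
`μ_b - μ_{b₀}` is a unit; this leaves `P_{b₀}(n) μ_{b₀}^n = 0` for all `n`. Finally, a polynomial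
vanishing on `ℕ` is zero in a torsion-free ring, since its top forward difference is
`(deg P)! • leadingCoeff P`.
-/

open Polynomial Finset

section ExpPolynomial

variable {R : Type*} [CommRing R]

namespace Polynomial

theorem eq_zero_of_forall_eval_natCast_eq_zero [IsAddTorsionFree R] {P : R[X]}
    (h : ∀ n : ℕ, P.eval (n : R) = 0) : P = 0 := by
  have hΔ : (fwdDiff 1)^[P.natDegree] P.eval 0 = 0 := by
    simp [fwdDiff_iter_eq_sum_shift, h]
  rw [P.fwdDiff_iter_degree_eq_factorial] at hΔ
  have : P.natDegree.factorial • P.leadingCoeff = 0 := by simpa [mul_comm, nsmul_eq_mul] using hΔ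
  rwa [smul_eq_zero_iff_right (Nat.factorial_ne_zero _), leadingCoeff_eq_zero] at this

/-- On the sequence `n ↦ P(n) μ^n`, the operator `f ↦ f(· + 1) - ν f` produces
`n ↦ (shiftSub μ ν P)(n) μ^n`. -/
noncomputable def shiftSub (μ ν : R) : R[X] →ₗ[R] R[X] := μ • taylor 1 - ν • LinearMap.id

theorem eval_shiftSub (μ ν : R) (P : R[X]) (x : R) :
    (shiftSub μ ν P).eval x = μ * P.eval (x + 1) - ν * P.eval x := by
  simp [shiftSub, taylor_eval]

theorem shiftSub_injective {μ ν : R} (h : IsUnit (μ - ν)) : Function.Injective (shiftSub μ ν) := by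
  rw [← LinearMap.ker_eq_bot, LinearMap.ker_eq_bot']
  intro P hP
  have hcoeff : (shiftSub μ ν P).coeff P.natDegree = (μ - ν) * P.leadingCoeff := by
    simp only [shiftSub, LinearMap.sub_apply, LinearMap.smul_apply, coeff_sub, coeff_smul,
      coeff_taylor_natDegree, LinearMap.id_apply, smul_eq_mul, sub_mul, leadingCoeff]
  rw [hP, coeff_zero, eq_comm, h.mul_right_eq_zero, leadingCoeff_eq_zero] at hcoeff
  exact hcoeff

theorem eval_shiftSub_self_iterate (μ : R) (k : ℕ) (P : R[X]) :
    (fun x => ((shiftSub μ μ)^[k] P).eval x) = μ ^ k • (fwdDiff 1)^[k] P.eval := by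
  induction k generalizing P with
  | zero => simp
  | succ k ih =>
    have hΔ : (fun x => (shiftSub μ μ P).eval x) = μ • fwdDiff 1 P.eval := by
      ext x; simp [eval_shiftSub, fwdDiff, mul_sub]
    rw [Function.iterate_succ_apply, ih, Function.iterate_succ_apply, hΔ,
      fwdDiff_iter_const_smul, smul_smul, pow_succ]

theorem eval_shiftSub_self_iterate_eq_zero {P : R[X]} {k : ℕ} (hP : P.natDegree < k) (μ x : R) :
    ((shiftSub μ μ)^[k] P).eval x = 0 := by
  have := congr_fun (eval_shiftSub_self_iterate μ k P) x
  rw [fwdDiff_iter_eq_zero_of_degree_lt hP] at this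
  simpa using this

theorem sum_eval_shiftSub_iterate_mul_pow_eq_zero {ι : Type*} (s : Finset ι) (P : ι → R[X])
    (μ : ι → R) (ν : R) (h : ∀ n : ℕ, ∑ i ∈ s, (P i).eval (n : R) * μ i ^ n = 0) (k n : ℕ) :
    ∑ i ∈ s, ((shiftSub (μ i) ν)^[k] (P i)).eval (n : R) * μ i ^ n = 0 := by
  induction k generalizing n with
  | zero => exact h n
  | succ k ih =>
    have hstep : ∑ i ∈ s, ((shiftSub (μ i) ν)^[k + 1] (P i)).eval (n : R) * μ i ^ n =
        ∑ i ∈ s, ((shiftSub (μ i) ν)^[k] (P i)).eval ((n + 1 : ℕ) : R) * μ i ^ (n + 1) -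
          ν * ∑ i ∈ s, ((shiftSub (μ i) ν)^[k] (P i)).eval (n : R) * μ i ^ n := by
      simp only [Function.iterate_succ_apply', eval_shiftSub, mul_sum, ← sum_sub_distrib]
      refine sum_congr rfl fun i _ => ?_
      push_cast
      ring
    rw [hstep, ih, ih, mul_zero, sub_zero]

theorem eq_zero_of_sum_eval_mul_pow_eq_zero [IsAddTorsionFree R] {ι : Type*} {μ : ι → R}
    (hμ : ∀ i, IsUnit (μ i)) (hμμ : Pairwise fun i j => IsUnit (μ i - μ j)) (s : Finset ι)
    {P : ι → R[X]} (h : ∀ n : ℕ, ∑ i ∈ s, (P i).eval (n : R) * μ i ^ n = 0) :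
    ∀ i ∈ s, P i = 0 := by
  classical
  induction s using Finset.induction_on generalizing P with
  | empty => simp
  | insert i₀ s hi₀ ih =>
    set k := (P i₀).natDegree + 1
    have hQ : ∀ n : ℕ, ∑ i ∈ s, ((shiftSub (μ i) (μ i₀))^[k] (P i)).eval (n : R) * μ i ^ n = 0 :=
      fun n => by
        have := sum_eval_shiftSub_iterate_mul_pow_eq_zero _ P μ (μ i₀) h k n
        rwa [sum_insert hi₀, eval_shiftSub_self_iterate_eq_zero (Nat.lt_succ_self _), zero_mul,
          zero_add] at this
    have hs : ∀ i ∈ s, P i = 0 := fun i hi =>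
      (shiftSub_injective (hμμ (ne_of_mem_of_not_mem hi hi₀))).iterate k
        (by rw [ih hQ i hi, iterate_map_zero])
    have h₀ : P i₀ = 0 := eq_zero_of_forall_eval_natCast_eq_zero fun n => by
      have := h n
      rw [sum_insert hi₀, sum_eq_zero fun i hi => by rw [hs i hi, eval_zero, zero_mul],
        add_zero] at this
      exact ((hμ i₀).pow n).mul_left_eq_zero.1 this
    simpa [forall_mem_insert] using ⟨h₀, hs⟩

end Polynomial

theorem linearIndependent_natCast_pow_mul_pow [IsAddTorsionFree R] {ι : Type*} {μ : ι → R}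
    (hμ : ∀ i, IsUnit (μ i)) (hμμ : Pairwise fun i j => IsUnit (μ i - μ j)) :
    LinearIndependent R (fun p : ℕ × ι => fun m : ℕ => (m : R) ^ p.1 * μ p.2 ^ m) := by
  classical
  rw [linearIndependent_iff']
  intro s c hsum p hp
  let P : ι → R[X] := fun i => ∑ q ∈ s with q.2 = i, monomial q.1 (c q)
  have hP : ∀ n : ℕ, ∑ i ∈ s.image Prod.snd, (P i).eval (n : R) * μ i ^ n = 0 := fun n => by
    have hn := congr_fun hsum n
    rw [Finset.sum_apply, Pi.zero_apply] at hn
    rw [← hn, ← sum_fiberwise_of_maps_to (g := Prod.snd) fun q hq => mem_image_of_mem _ hq]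
    refine sum_congr rfl fun i _ => ?_
    simp only [P, eval_finsetSum, eval_monomial, sum_mul, Pi.smul_apply, smul_eq_mul]
    refine sum_congr rfl fun q hq => ?_
    rw [(mem_filter.1 hq).2, mul_assoc]
  have hcoeff : (P p.2).coeff p.1 = c p := by
    simp only [P, finsetSum_coeff, coeff_monomial]
    rw [sum_eq_single_of_mem p (mem_filter.2 ⟨hp, rfl⟩ : p ∈ s.filter (·.2 = p.2)), if_pos rfl]
    intro q hq hqp
    exact if_neg fun h => hqp (Prod.ext h (mem_filter.1 hq).2)
  rw [← hcoeff, eq_zero_of_sum_eval_mul_pow_eq_zero hμ hμμ _ hP p.2 (mem_image_of_mem _ hp),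
    coeff_zero]

theorem Units.isUnit_val_zpow_sub_val_zpow (L : Rˣ) (hL : ∀ i : ℕ, 0 < i → IsUnit ((L : R) ^ i - 1))
    {a b : ℤ} (hab : a ≠ b) : IsUnit (((L ^ a : Rˣ) : R) - ((L ^ b : Rˣ) : R)) := by
  wlog h : b < a generalizing a b
  · simpa using (this hab.symm (lt_of_le_of_ne (not_lt.1 h) hab)).neg
  obtain ⟨k, hk, rfl⟩ : ∃ k : ℕ, 0 < k ∧ a = b + k := ⟨(a - b).toNat, by omega, by omega⟩
  have : ((L ^ (b + k : ℤ) : Rˣ) : R) - ((L ^ b : Rˣ) : R) =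
      ((L ^ b : Rˣ) : R) * ((L : R) ^ k - 1) := by
    rw [zpow_add, zpow_natCast, Units.val_mul, Units.val_pow_eq_pow_val]
    ring
  rw [this]
  exact (L ^ b).isUnit.mul (hL k hk)

theorem LinearIndependent.mul_fun_prod {ι κ X Y : Type*} {f : ι → X → R} {g : κ → Y → R}
    (hf : LinearIndependent R f) (hg : LinearIndependent R g) :
    LinearIndependent R (fun p : ι × κ => fun xy : X × Y => f p.1 xy.1 * g p.2 xy.2) := by
  classical
  rw [linearIndependent_iff''] at hf hg ⊢
  intro s c hc hsum
  set s₁ := s.image Prod.fst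
  set s₂ := s.image Prod.snd
  have hc' : ∀ i j, (i, j) ∉ s₁ ×ˢ s₂ → c (i, j) = 0 := fun i j hij =>
    hc _ fun hs => hij (mem_product.2 ⟨mem_image_of_mem _ hs, mem_image_of_mem _ hs⟩)
  have hrow : ∀ x y, ∑ i ∈ s₁, (∑ j ∈ s₂, c (i, j) * g j y) * f i x = 0 := fun x y => by
    have := congr_fun hsum (x, y)
    rw [Finset.sum_apply, Pi.zero_apply, sum_subset (subset_product (s := s)) fun q _ hq => by
      rw [hc q hq, zero_smul, Pi.zero_apply], sum_product] at this
    rw [← this]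
    simp only [sum_mul, Pi.smul_apply, smul_eq_mul]
    exact sum_congr rfl fun i _ => sum_congr rfl fun j _ => by ring
  have hcol : ∀ y i, ∑ j ∈ s₂, c (i, j) * g j y = 0 := fun y =>
    hf s₁ _ (fun i hi => sum_eq_zero fun j _ => by
        rw [hc' i j fun h => hi (mem_product.1 h).1, zero_mul])
      (funext fun x => by simpa [Finset.sum_apply] using hrow x y)
  rintro ⟨i, j⟩
  exact hg s₂ (fun j => c (i, j)) (fun j hj => hc' i j fun h => hj (mem_product.1 h).2)
    (funext fun y => by simpa [Finset.sum_apply] using hcol y i) j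

theorem LinearIndependent.comp_funLeft {ι X Y : Type*} {v : ι → Y → R}
    (hv : LinearIndependent R v) {e : X → Y} (he : Function.Surjective e) :
    LinearIndependent R (fun i => v i ∘ e) :=
  hv.map' (LinearMap.funLeft R R e)
    (LinearMap.ker_eq_bot.2 (LinearMap.funLeft_injective_of_surjective _ _ _ he))

def expMonomial (L : Rˣ) (r : ℕ) (ab : (Fin r → ℕ) × (Fin r → ℤ)) (n : Fin r → ℕ) : R :=
  (∏ i, (n i : R) ^ ab.1 i) * ((L ^ (∑ i, ab.2 i * (n i : ℤ)) : Rˣ) : R)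

theorem map_expMonomial {S : Type*} [CommRing S] (f : R →+* S) (L : Rˣ) (r : ℕ)
    (ab : (Fin r → ℕ) × (Fin r → ℤ)) (n : Fin r → ℕ) :
    f (expMonomial L r ab n) = expMonomial (Units.map f.toMonoidHom L) r ab n := by
  simp [expMonomial, map_prod, ← map_zpow]

theorem expMonomial_succ (L : Rˣ) (r : ℕ) (ab : (Fin (r + 1) → ℕ) × (Fin (r + 1) → ℤ))
    (n : Fin (r + 1) → ℕ) :
    expMonomial L (r + 1) ab n = ((n 0 : R) ^ ab.1 0 * ((L ^ ab.2 0 : Rˣ) : R) ^ n 0) *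
      expMonomial L r (Fin.tail ab.1, Fin.tail ab.2) (Fin.tail n) := by
  simp only [expMonomial, Fin.prod_univ_succ, Fin.sum_univ_succ, zpow_add, Units.val_mul,
    Fin.tail, ← Units.val_pow_eq_pow_val, ← zpow_natCast, ← zpow_mul]
  ring

theorem linearIndependent_expMonomial [IsAddTorsionFree R] (L : Rˣ)
    (hL : ∀ i : ℕ, 0 < i → IsUnit ((L : R) ^ i - 1)) :
    ∀ r, LinearIndependent R (expMonomial L r)
  | 0 => by
    rw [linearIndependent_iff']
    intro s g hsum ab hab
    have hs : s = {ab} := eq_singleton_iff_unique_mem.2 ⟨hab, fun _ _ => Subsingleton.elim _ _⟩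
    simpa [hs, expMonomial] using congr_fun hsum default
  | r + 1 => by
    have hprod := (linearIndependent_natCast_pow_mul_pow (fun b : ℤ => (L ^ b).isUnit)
      fun a b hab => L.isUnit_val_zpow_sub_val_zpow hL hab).mul_fun_prod
      (linearIndependent_expMonomial L hL r)
    let e : (Fin (r + 1) → ℕ) ≃ ℕ × (Fin r → ℕ) := (Fin.consEquiv fun _ => ℕ).symm
    let φ := (e.prodCongr (Fin.consEquiv fun _ => ℤ).symm).trans
      (Equiv.prodProdProdComm ℕ (Fin r → ℕ) ℤ (Fin r → ℤ))
    convert (hprod.comp φ φ.injective).comp_funLeft e.surjective using 1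
    ext ab n
    simp [expMonomial_succ, φ, e]

variable (R) in
abbrev IntLocalization := Localization (Algebra.algebraMapSubmonoid R (nonZeroDivisors ℤ))

theorem algebraMap_intLocalization_eq_zero_iff {x : R} :
    algebraMap R (IntLocalization R) x = 0 ↔ ∃ N : ℤ, N ≠ 0 ∧ N • x = 0 := by
  rw [IsLocalization.map_eq_zero_iff (Algebra.algebraMapSubmonoid R (nonZeroDivisors ℤ))]
  constructor
  · rintro ⟨⟨_, N, hN, rfl⟩, h⟩
    exact ⟨N, nonZeroDivisors.ne_zero hN, by simpa [zsmul_eq_mul] using h⟩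
  · rintro ⟨N, hN, h⟩
    exact ⟨⟨_, N, mem_nonZeroDivisors_of_ne_zero hN, rfl⟩, by simpa [zsmul_eq_mul] using h⟩

instance : IsAddTorsionFree (IntLocalization R) where
  nsmul_right_injective n hn x y h := by
    have hu : IsUnit (n : IntLocalization R) := by
      simpa using IsLocalization.map_units (IntLocalization R)
        (⟨_, n, mem_nonZeroDivisors_of_ne_zero (Int.natCast_ne_zero.2 hn), rfl⟩ :
          Algebra.algebraMapSubmonoid R (nonZeroDivisors ℤ))
    simpa [nsmul_eq_mul, hu.mul_right_inj] using h

end ExpPolynomial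

theorem stmt3_general {R : Type*} [CommRing R] (r : ℕ) (L : Rˣ)
    (hL : ∀ i : ℕ, 0 < i → IsUnit ((L : R) ^ i - 1))
    (S : Finset ((Fin r → ℕ) × (Fin r → ℤ))) (c : (Fin r → ℕ) × (Fin r → ℤ) → R)
    (hf : ∀ n : Fin r → ℕ, ∃ N : ℤ, N ≠ 0 ∧
      N • (∑ ab ∈ S, c ab * (∏ i, (n i : R) ^ ab.1 i) *
        ((L ^ (∑ i, ab.2 i * (n i : ℤ)) : Rˣ) : R)) = 0) :
    ∀ ab ∈ S, ∃ N : ℤ, N ≠ 0 ∧ N • c ab = 0 := by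
  let π := algebraMap R (IntLocalization R)
  have hL' : ∀ i : ℕ, 0 < i → IsUnit ((Units.map π.toMonoidHom L : IntLocalization R) ^ i - 1) :=
    fun i hi => by simpa using (hL i hi).map π
  have hsum : ∑ ab ∈ S, π (c ab) • expMonomial (Units.map π.toMonoidHom L) r ab = 0 :=
    funext fun n => by
      obtain ⟨N, hN, hNf⟩ := hf n
      have h0 := algebraMap_intLocalization_eq_zero_iff.2 ⟨N, hN, hNf⟩
      rw [map_sum] at h0
      rw [Finset.sum_apply, Pi.zero_apply, ← h0]
      refine sum_congr rfl fun ab _ => ?_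
      rw [Pi.smul_apply, smul_eq_mul, ← map_expMonomial, ← map_mul, expMonomial, mul_assoc]
  intro ab hab
  exact algebraMap_intLocalization_eq_zero_iff.1
    (linearIndependent_iff'.1 (linearIndependent_expMonomial _ hL' r) S _ hsum ab hab)

/-- Several-variable torsion version of Proposition 4.1(2): if
`f(n) = ∑ (a,b) ∈ S, c (a,b) * n^a * L^(b·n)` is torsion in `R` for every `n ∈ ℕ^r`,
then every coefficient `c (a,b)` is torsion. -/
theorem stmt3 {R : Type*} [CommRing R] (r : ℕ) (hr : 0 < r) (L : Rˣ)
    (hL : ∀ i : ℕ, 0 < i → IsUnit ((L : R) ^ i - 1))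
    (S : Finset ((Fin r → ℕ) × (Fin r → ℤ))) (c : (Fin r → ℕ) × (Fin r → ℤ) → R)
    (hf : ∀ n : Fin r → ℕ, ∃ N : ℤ, N ≠ 0 ∧
      N • (∑ ab ∈ S, c ab * (∏ i, (n i : R) ^ ab.1 i) *
        ((L ^ (∑ i, ab.2 i * (n i : ℤ)) : Rˣ) : R)) = 0) :
    ∀ ab ∈ S, ∃ N : ℤ, N ≠ 0 ∧ N • c ab = 0 :=
  stmt3_general r L hL S c hf
end

section
/- Let R be a commutative ring, let r be a positive integer, and let L be a unit of R such that L^i − 1 is a unit of R for every positive integer i. Let S ⊆ ℕ^r × ℤ^r be a finite set and let c_{a,b} ∈ R for each (a,b) ∈ S. If Σ_{(a,b)∈S} c_{a,b} · n^a · L^{b·n} = 0 for every n ∈ ℕ^r, then for every fixed b ∈ ℤ^r the polynomial part vanishes pointwise: for every n ∈ ℕ^r, Σ_{a : (a,b)∈S} c_{a,b} · n^a = 0, where n^a = n_1^{a_1}⋯n_r^{a_r} and b·n = b_1 n_1 + ⋯ + b_r n_r. -/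
open Polynomial

section Aux

variable {R : Type*} [CommRing R]

/-- forward difference operator on sequences -/
private def dfun (f : ℕ → R) : ℕ → R := fun t => f (t + 1) - f t

/-- twisted difference operator -/
private def sfun (v w : R) (f : ℕ → R) : ℕ → R := fun t => v * f (t + 1) - w * f t

private lemma dfun_zero : dfun (R := R) 0 = 0 := by funext t; simp [dfun]

private lemma sfun_zero (v w : R) : sfun v w 0 = 0 := by funext t; simp [sfun]

private lemma dfun_sfun_comm (v w : R) :
    Function.Commute (dfun (R := R)) (sfun v w) := by
  intro f; funext t; simp only [dfun, sfun, Function.comp_apply]; ring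

private lemma dfun_iter_sfun_iter (v w : R) (m k : ℕ) (f : ℕ → R) :
    dfun^[m] ((sfun v w)^[k] f) = (sfun v w)^[k] (dfun^[m] f) :=
  ((dfun_sfun_comm v w).iterate_iterate m k) f

private lemma sfun_iter_const (v w : R) (f : ℕ → R) (hf : dfun f = 0) (D : ℕ) :
    (sfun v w)^[D] f = fun t => (v - w) ^ D * f t := by
  induction D with
  | zero => simp
  | succ D ih =>
    rw [Function.iterate_succ_apply', ih]
    funext t
    have h1 : f (t + 1) = f t := by
      have := congrFun hf t
      simpa [dfun, sub_eq_zero] using this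
    simp only [sfun, h1]
    ring

private lemma recover (v w : R) (hu : IsUnit (v - w)) (D : ℕ) :
    ∀ (j : ℕ) (f : ℕ → R), dfun^[j] f = 0 → (sfun v w)^[D] f = 0 → f = 0 := by
  intro j
  induction j with
  | zero => intro f h _; exact h
  | succ j ih =>
    intro f hd hs
    have hdf : dfun f = 0 := by
      apply ih
      · rw [← Function.iterate_succ_apply]; exact hd
      · have h1 : dfun^[1] ((sfun v w)^[D] f) = (sfun v w)^[D] (dfun^[1] f) :=
          dfun_iter_sfun_iter v w 1 D f
        simp only [Function.iterate_one] at h1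
        rw [← h1, hs, dfun_zero]
    have h2 := sfun_iter_const v w f hdf D
    rw [hs] at h2
    funext t
    have h3 : (v - w) ^ D * f t = 0 := (congrFun h2.symm t)
    exact ((hu.pow D).mul_right_eq_zero).mp h3

private lemma sfun_self_iter (v : R) (f : ℕ → R) (D : ℕ) :
    (sfun v v)^[D] f = fun t => v ^ D * (dfun^[D] f) t := by
  induction D with
  | zero => simp
  | succ D ih =>
    rw [Function.iterate_succ_apply', ih]
    have h1 : dfun^[D + 1] f = dfun (dfun^[D] f) := Function.iterate_succ_apply' dfun D f
    rw [h1]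
    funext t
    simp only [sfun, dfun]
    ring

private lemma key {ι : Type*} [DecidableEq ι] (B : Finset ι) :
    ∀ (u : ι → Rˣ), (∀ b ∈ B, ∀ b' ∈ B, b ≠ b' → IsUnit ((u b : R) - (u b' : R))) →
    ∀ (D : ℕ) (f : ι → ℕ → R), (∀ b ∈ B, dfun^[D] (f b) = 0) →
    (∀ t : ℕ, ∑ b ∈ B, f b t * ((u b ^ t : Rˣ) : R) = 0) →
    ∀ b ∈ B, ∀ t, f b t = 0 := by
  induction B using Finset.induction_on with
  | empty => intro u _ D f _ _ b hb; simp at hb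
  | @insert b₀ B' hb₀ ih =>
    intro u hu D f hD hsum
    have step : ∀ (g : ι → ℕ → R),
        sfun 1 (u b₀ : R) (fun t => ∑ b ∈ insert b₀ B', g b t * ((u b ^ t : Rˣ) : R))
          = fun t => ∑ b ∈ insert b₀ B',
              (sfun (u b : R) (u b₀ : R) (g b)) t * ((u b ^ t : Rˣ) : R) := by
      intro g
      funext t
      simp only [sfun, one_mul, Finset.mul_sum, ← Finset.sum_sub_distrib]
      refine Finset.sum_congr rfl fun b _ => ?_
      have hpow : ((u b ^ (t + 1) : Rˣ) : R) = (u b : R) * ((u b ^ t : Rˣ) : R) := by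
        rw [pow_succ']
        simp [Units.val_mul]
      rw [hpow]
      ring
    have iter : ∀ (m : ℕ),
        (sfun 1 (u b₀ : R))^[m] (fun t => ∑ b ∈ insert b₀ B', f b t * ((u b ^ t : Rˣ) : R))
          = fun t => ∑ b ∈ insert b₀ B',
              ((sfun (u b : R) (u b₀ : R))^[m] (f b)) t * ((u b ^ t : Rˣ) : R) := by
      intro m
      induction m with
      | zero => simp
      | succ m ihm =>
        rw [Function.iterate_succ_apply', ihm, step (fun b => (sfun (u b : R) (u b₀ : R))^[m] (f b))]
        funext t
        refine Finset.sum_congr rfl fun b _ => ?_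
        rw [← Function.iterate_succ_apply' (sfun (u b : R) (u b₀ : R)) m (f b)]
    have hzero : (fun t => ∑ b ∈ insert b₀ B', f b t * ((u b ^ t : Rˣ) : R)) = 0 := funext hsum
    have hiterzero : (fun t => ∑ b ∈ insert b₀ B',
        ((sfun (u b : R) (u b₀ : R))^[D] (f b)) t * ((u b ^ t : Rˣ) : R)) = 0 := by
      rw [← iter D, hzero, Function.iterate_fixed (sfun_zero _ _) D]
    have hb0term : (sfun (u b₀ : R) (u b₀ : R))^[D] (f b₀) = 0 := by
      rw [sfun_self_iter, hD b₀ (Finset.mem_insert_self _ _)]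
      funext t; simp
    have hsum' : ∀ t, ∑ b ∈ B', ((sfun (u b : R) (u b₀ : R))^[D] (f b)) t * ((u b ^ t : Rˣ) : R) = 0 := by
      intro t
      have h := congrFun hiterzero t
      rw [Finset.sum_insert hb₀, hb0term] at h
      simpa using h
    have hD' : ∀ b ∈ B', dfun^[D] ((sfun (u b : R) (u b₀ : R))^[D] (f b)) = 0 := by
      intro b hb
      rw [dfun_iter_sfun_iter, hD b (Finset.mem_insert_of_mem hb),
        Function.iterate_fixed (sfun_zero _ _) D]
    have hg := ih u
      (fun b hb b' hb' hne => hu b (Finset.mem_insert_of_mem hb) b' (Finset.mem_insert_of_mem hb') hne)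
      D _ hD' hsum'
    have hfB' : ∀ b ∈ B', ∀ t, f b t = 0 := by
      intro b hb
      have h1 : (sfun (u b : R) (u b₀ : R))^[D] (f b) = 0 := funext (hg b hb)
      have hne : b ≠ b₀ := fun h => hb₀ (h ▸ hb)
      have h2 : f b = 0 := recover (u b : R) (u b₀ : R)
        (hu b (Finset.mem_insert_of_mem hb) b₀ (Finset.mem_insert_self _ _) hne)
        D D (f b) (hD b (Finset.mem_insert_of_mem hb)) h1
      intro t; rw [h2]; rfl
    intro b hb
    rcases Finset.mem_insert.mp hb with rfl | hb'
    · intro t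
      have h := hsum t
      rw [Finset.sum_insert hb₀] at h
      have h3 : ∑ b ∈ B', f b t * ((u b ^ t : Rˣ) : R) = 0 :=
        Finset.sum_eq_zero fun b hbmem => by rw [hfB' b hbmem t, zero_mul]
      rw [h3, add_zero] at h
      exact (Units.mul_left_eq_zero _).mp h
    · exact hfB' b hb'

private lemma taylor_top (p : R[X]) :
    (Polynomial.taylor (1 : R) p).coeff p.natDegree = p.leadingCoeff := by
  rw [Polynomial.taylor_coeff]
  have h : Polynomial.hasseDeriv p.natDegree p = Polynomial.C p.leadingCoeff := by
    ext n
    rw [Polynomial.hasseDeriv_coeff]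
    cases n with
    | zero =>
      simp only [Nat.zero_add, Nat.choose_self, Nat.cast_one, one_mul,
        Polynomial.coeff_C_zero, Polynomial.leadingCoeff]
    | succ n =>
      rw [Polynomial.coeff_eq_zero_of_natDegree_lt (by omega), Polynomial.coeff_C]
      simp
  rw [h, Polynomial.eval_C]

private lemma dfun_poly : ∀ (m : ℕ) (p : R[X]), p.natDegree ≤ m →
    dfun^[m + 1] (fun t : ℕ => p.eval (t : R)) = 0 := by
  intro m
  induction m with
  | zero =>
    intro p hp
    obtain ⟨a, rfl⟩ := Polynomial.natDegree_eq_zero.mp (Nat.le_zero.mp hp)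
    funext t
    simp [dfun]
  | succ m ih =>
    intro p hp
    have hstep : dfun (fun t : ℕ => p.eval (t : R))
        = fun t : ℕ => (Polynomial.taylor (1 : R) p - p).eval (t : R) := by
      funext t
      simp only [dfun, Polynomial.eval_sub, Polynomial.taylor_eval]
      push_cast
      ring
    have hdeg : (Polynomial.taylor (1 : R) p - p).natDegree ≤ m := by
      refine Polynomial.natDegree_le_iff_coeff_eq_zero.mpr fun N hN => ?_
      rw [Polynomial.coeff_sub]
      by_cases hNp : p.natDegree < N
      · rw [Polynomial.coeff_eq_zero_of_natDegree_lt hNp,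
          Polynomial.coeff_eq_zero_of_natDegree_lt (by rw [Polynomial.natDegree_taylor]; exact hNp),
          sub_self]
      · have hNeq : N = p.natDegree := by omega
        rw [hNeq, taylor_top, Polynomial.leadingCoeff, sub_self]
    rw [Function.iterate_succ_apply, hstep, ih _ hdeg]

private lemma exists_sep {r : ℕ} :
    ∀ (D : Finset (Fin r → ℤ)), (∀ d ∈ D, d ≠ 0) →
      ∃ v : Fin r → ℕ, ∀ d ∈ D, (∑ i, d i * (v i : ℤ)) ≠ 0 := by
  intro D
  induction D using Finset.induction_on with
  | empty => intro _; exact ⟨0, by simp⟩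
  | @insert d₀ D' hd₀ ih =>
    intro hD
    obtain ⟨v, hv⟩ := ih (fun d hd => hD d (Finset.mem_insert_of_mem hd))
    have hd0 : d₀ ≠ 0 := hD d₀ (Finset.mem_insert_self _ _)
    obtain ⟨j, hj⟩ : ∃ j, d₀ j ≠ 0 := by
      by_contra h
      push_neg at h
      exact hd0 (funext h)
    set M : ℕ := 1 + (insert d₀ D').sup (fun d => (∑ i, d i * (v i : ℤ)).natAbs) with hM
    refine ⟨fun i => v i + M * (if i = j then 1 else 0), ?_⟩
    intro d hd
    have hsum : (∑ i, d i * ((v i + M * (if i = j then 1 else 0) : ℕ) : ℤ))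
        = (∑ i, d i * (v i : ℤ)) + (M : ℤ) * d j := by
      have e1 : ∀ i ∈ Finset.univ, d i * ((v i + M * (if i = j then 1 else 0) : ℕ) : ℤ)
          = d i * (v i : ℤ) + (if i = j then (M : ℤ) * d i else 0) := by
        intro i _
        by_cases h : i = j <;> push_cast <;> simp [h] <;> ring
      rw [Finset.sum_congr rfl e1, Finset.sum_add_distrib]
      congr 1
      simp
    rw [hsum]
    by_cases hdj : d j = 0
    · have hne : d ≠ d₀ := fun h => hj (by rw [← h]; exact hdj)
      have hd' : d ∈ D' := by
        rcases Finset.mem_insert.mp hd with h | h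
        · exact absurd h hne
        · exact h
      rw [hdj, mul_zero, add_zero]
      exact hv d hd'
    · intro hcon
      have h1 : (∑ i, d i * (v i : ℤ)).natAbs < M := by
        have hle : (∑ i, d i * (v i : ℤ)).natAbs
            ≤ (insert d₀ D').sup (fun d => (∑ i, d i * (v i : ℤ)).natAbs) :=
          Finset.le_sup (f := fun d => (∑ i, d i * (v i : ℤ)).natAbs) hd
        rw [hM, add_comm]
        exact Nat.lt_succ_of_le hle
      have h2 : M ≤ ((M : ℤ) * d j).natAbs := by
        rw [Int.natAbs_mul, Int.natAbs_natCast]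
        have hpos : 1 ≤ (d j).natAbs := Int.natAbs_pos.mpr hdj
        calc M = M * 1 := (mul_one M).symm
        _ ≤ M * (d j).natAbs := Nat.mul_le_mul_left M hpos
      have h3 : (∑ i, d i * (v i : ℤ)).natAbs = ((M : ℤ) * d j).natAbs := by
        rw [show (∑ i, d i * (v i : ℤ)) = -((M : ℤ) * d j) by linarith, Int.natAbs_neg]
      exact absurd h3 (Nat.ne_of_lt (lt_of_lt_of_le h1 h2))

private lemma unit_zpow_sub_one (L : Rˣ) (hL : ∀ i : ℕ, 0 < i → IsUnit ((L : R) ^ i - 1)) :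
    ∀ z : ℤ, z ≠ 0 → IsUnit (((L ^ z : Rˣ) : R) - 1) := by
  intro z hz
  rcases lt_trichotomy z 0 with h | h | h
  · have hpos : 0 < (-z).toNat := by omega
    have hone : (L ^ z : Rˣ) * L ^ (-z).toNat = 1 := by
      rw [← zpow_natCast L (-z).toNat, ← zpow_add]
      rw [show z + ((-z).toNat : ℤ) = 0 by omega, zpow_zero]
    have h2 : ((L ^ z : Rˣ) : R) * (L : R) ^ (-z).toNat = 1 := by
      have := congrArg (Units.val) hone
      simpa [Units.val_mul] using this
    have h1 : ((L ^ z : Rˣ) : R) - 1 = ((L ^ z : Rˣ) : R) * -((L : R) ^ (-z).toNat - 1) := by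
      rw [mul_neg, mul_sub, h2]
      ring
    rw [h1]
    exact ((L ^ z).isUnit).mul ((hL _ hpos).neg)
  · exact absurd h hz
  · obtain ⟨k, rfl⟩ : ∃ k : ℕ, z = (k : ℤ) := ⟨z.toNat, by omega⟩
    have hval : ((L ^ (k : ℤ) : Rˣ) : R) = (L : R) ^ k := by
      rw [zpow_natCast]
      simp
    rw [hval]
    exact hL k (by omega)

private lemma unit_zpow_sub (L : Rˣ) (hL : ∀ i : ℕ, 0 < i → IsUnit ((L : R) ^ i - 1))
    (z z' : ℤ) (h : z ≠ z') :
    IsUnit (((L ^ z : Rˣ) : R) - ((L ^ z' : Rˣ) : R)) := by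
  have h1 : ((L ^ z : Rˣ) : R) - ((L ^ z' : Rˣ) : R)
      = ((L ^ z' : Rˣ) : R) * (((L ^ (z - z') : Rˣ) : R) - 1) := by
    rw [mul_sub, mul_one, ← Units.val_mul, ← zpow_add]
    rw [show z' + (z - z') = z by ring]
  rw [h1]
  exact (L ^ z').isUnit.mul (unit_zpow_sub_one L hL (z - z') (sub_ne_zero.mpr h))

end Aux

/-- Proposition 1.3 of the corrigendum: if the full polynomial-exponential sum vanishes
at every `n ∈ ℕ^r`, then for each fixed `b` the corresponding polynomial block vanishes
pointwise. -/
theorem stmt5 {R : Type*} [CommRing R] (r : ℕ) (hr : 0 < r) (L : Rˣ)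
    (hL : ∀ i : ℕ, 0 < i → IsUnit ((L : R) ^ i - 1))
    (S : Finset ((Fin r → ℕ) × (Fin r → ℤ))) (c : (Fin r → ℕ) × (Fin r → ℤ) → R)
    (hf : ∀ n : Fin r → ℕ,
      ∑ ab ∈ S, c ab * (∏ i, (n i : R) ^ ab.1 i) *
        ((L ^ (∑ i, ab.2 i * (n i : ℤ)) : Rˣ) : R) = 0) :
    ∀ b : Fin r → ℤ, ∀ n : Fin r → ℕ,
      ∑ ab ∈ S.filter (fun ab => ab.2 = b), c ab * (∏ i, (n i : R) ^ ab.1 i) = 0 := by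
  classical
  intro b n
  set B : Finset (Fin r → ℤ) := S.image Prod.snd with hB
  by_cases hbB : b ∈ B
  swap
  · have hempty : S.filter (fun ab => ab.2 = b) = ∅ := by
      rw [Finset.filter_eq_empty_iff]
      intro ab hab h
      exact hbB (h ▸ Finset.mem_image_of_mem Prod.snd hab)
    rw [hempty, Finset.sum_empty]
  · have hDset : ∀ d ∈ ((B ×ˢ B).image fun p => p.1 - p.2).erase 0, d ≠ 0 :=
      fun d hd => Finset.ne_of_mem_erase hd
    obtain ⟨v, hv⟩ := exists_sep _ hDset
    have hsep : ∀ b₁ ∈ B, ∀ b₂ ∈ B, b₁ ≠ b₂ →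
        (∑ i, b₁ i * (v i : ℤ)) ≠ (∑ i, b₂ i * (v i : ℤ)) := by
      intro b₁ h₁ b₂ h₂ hne heq
      have hmem : b₁ - b₂ ∈ ((B ×ˢ B).image fun p => p.1 - p.2).erase 0 := by
        refine Finset.mem_erase.mpr ⟨sub_ne_zero.mpr hne, ?_⟩
        exact Finset.mem_image.mpr ⟨(b₁, b₂), Finset.mem_product.mpr ⟨h₁, h₂⟩, rfl⟩
      apply hv _ hmem
      have e : ∀ i ∈ Finset.univ, (b₁ - b₂) i * (v i : ℤ) = b₁ i * v i - b₂ i * v i := by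
        intro i _
        simp [sub_mul]
      rw [Finset.sum_congr rfl e, Finset.sum_sub_distrib, heq, sub_self]
    set u : (Fin r → ℤ) → Rˣ := fun b' => L ^ (∑ i, b' i * (v i : ℤ)) with hu_def
    set f : (Fin r → ℤ) → ℕ → R := fun b' t =>
        (∑ ab ∈ S.filter (fun ab => ab.2 = b'),
          c ab * ∏ i, ((n i + t * v i : ℕ) : R) ^ ab.1 i) *
        ((L ^ (∑ i, b' i * (n i : ℤ)) : Rˣ) : R) with hf_def
    set P : (Fin r → ℤ) → Polynomial R := fun b' =>
        (∑ ab ∈ S.filter (fun ab => ab.2 = b'),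
          Polynomial.C (c ab) *
            ∏ i, (Polynomial.C ((n i : R)) + Polynomial.C ((v i : R)) * Polynomial.X) ^ ab.1 i) *
        Polynomial.C ((L ^ (∑ i, b' i * (n i : ℤ)) : Rˣ) : R) with hP_def
    have hfP : ∀ b' t, f b' t = (P b').eval (t : R) := by
      intro b' t
      rw [hf_def, hP_def]
      simp only [Polynomial.eval_mul, Polynomial.eval_finset_sum, Polynomial.eval_prod,
        Polynomial.eval_pow, Polynomial.eval_add, Polynomial.eval_C, Polynomial.eval_X]
      congr 1
      refine Finset.sum_congr rfl fun ab _ => ?_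
      congr 1
      refine Finset.prod_congr rfl fun i _ => ?_
      congr 1
      push_cast
      ring
    set D : ℕ := B.sup (fun b' => (P b').natDegree) + 1 with hD_def
    have hDf : ∀ b' ∈ B, dfun^[D] (f b') = 0 := by
      intro b' hb'
      have h1 : f b' = fun t : ℕ => (P b').eval (t : R) := funext (hfP b')
      rw [h1, hD_def]
      exact dfun_poly _ (P b') (Finset.le_sup (f := fun b' => (P b').natDegree) hb')
    have hsum : ∀ t : ℕ, ∑ b' ∈ B, f b' t * ((u b' ^ t : Rˣ) : R) = 0 := by
      intro t
      have hmain := hf (fun i => n i + t * v i)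
      have hregroup := Finset.sum_fiberwise_of_maps_to (g := fun ab => ab.2) (t := B)
        (fun ab hab => Finset.mem_image_of_mem Prod.snd hab)
        (fun ab => c ab * (∏ i, ((n i + t * v i : ℕ) : R) ^ ab.1 i) *
          ((L ^ (∑ i, ab.2 i * ((n i + t * v i : ℕ) : ℤ)) : Rˣ) : R))
      have h0 : ∑ b' ∈ B, ∑ ab ∈ S.filter (fun ab => ab.2 = b'),
          c ab * (∏ i, ((n i + t * v i : ℕ) : R) ^ ab.1 i) *
            ((L ^ (∑ i, ab.2 i * ((n i + t * v i : ℕ) : ℤ)) : Rˣ) : R) = 0 :=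
        hregroup.trans hmain
      rw [← h0]
      refine Finset.sum_congr rfl fun b' hb' => ?_
      simp only [hf_def, hu_def]
      rw [Finset.sum_mul, Finset.sum_mul]
      refine Finset.sum_congr rfl fun ab hab => ?_
      have habb : ab.2 = b' := (Finset.mem_filter.mp hab).2
      have hexp : (∑ i, ab.2 i * ((n i + t * v i : ℕ) : ℤ))
          = (∑ i, b' i * (n i : ℤ)) + (∑ i, b' i * (v i : ℤ)) * t := by
        rw [habb, Finset.sum_mul, ← Finset.sum_add_distrib]
        refine Finset.sum_congr rfl fun i _ => ?_
        push_cast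
        ring
      have hLsplit : ((L ^ (∑ i, ab.2 i * ((n i + t * v i : ℕ) : ℤ)) : Rˣ) : R)
          = ((L ^ (∑ i, b' i * (n i : ℤ)) : Rˣ) : R) *
            (((L ^ (∑ i, b' i * (v i : ℤ)) : Rˣ) ^ t : Rˣ) : R) := by
        rw [hexp, zpow_add, Units.val_mul]
        congr 1
        rw [zpow_mul, zpow_natCast]
      rw [hLsplit]
      ring
    have hupair : ∀ b₁ ∈ B, ∀ b₂ ∈ B, b₁ ≠ b₂ → IsUnit ((u b₁ : R) - (u b₂ : R)) :=
      fun b₁ h₁ b₂ h₂ hne => unit_zpow_sub L hL _ _ (hsep b₁ h₁ b₂ h₂ hne)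
    have hfinal := key B u hupair D f hDf hsum b hbB 0
    rw [hf_def] at hfinal
    have hmain0 : (∑ ab ∈ S.filter (fun ab => ab.2 = b), c ab * ∏ i, ((n i : R)) ^ ab.1 i) *
        ((L ^ (∑ i, b i * (n i : ℤ)) : Rˣ) : R) = 0 := by
      simpa using hfinal
    exact (Units.mul_left_eq_zero _).mp hmain0
end

section
/- Let R be a commutative ring and let p be a polynomial with coefficients in R such that every coefficient of p is torsion (annihilated by some nonzero integer). If p(n) = 0 for all but finitely many natural numbers n, then p(n) = 0 for every natural number n. -/
/-- Lemma `l2` of the corrigendum: if every coefficient of a polynomial `p ∈ R[X]` is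
torsion and `p(n) = 0` for all but finitely many natural numbers `n`, then `p(n) = 0`
for every natural number `n`. -/
theorem stmt6 {R : Type*} [CommRing R] (p : Polynomial R)
    (htor : ∀ i : ℕ, ∃ N : ℤ, N ≠ 0 ∧ N • p.coeff i = 0)
    (hf : {n : ℕ | p.eval (n : R) ≠ 0}.Finite) :
    ∀ n : ℕ, p.eval (n : R) = 0 := by
  choose N hN0 hN using htor
  set M : ℤ := ∏ i ∈ Finset.range (p.natDegree + 1), N i with hMdef
  have hM0 : M ≠ 0 := Finset.prod_ne_zero_iff.mpr fun i _ => hN0 i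
  have hMann : ∀ i, M • p.coeff i = 0 := by
    intro i
    by_cases hi : i ≤ p.natDegree
    · obtain ⟨k, hk⟩ :=
        Finset.dvd_prod_of_mem N (Finset.mem_range.mpr (Nat.lt_succ_of_le hi))
      rw [hMdef, hk, mul_smul, smul_comm, hN, smul_zero]
    · rw [p.coeff_eq_zero_of_natDegree_lt (lt_of_not_ge hi), smul_zero]
  have key : ∀ a b : ℕ, (M ∣ (b : ℤ) - (a : ℤ)) → p.eval (b : R) = p.eval (a : R) := by
    intro a b hdvd
    have h1 : p.eval (b : R) - p.eval (a : R) = 0 := by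
      rw [Polynomial.eval_eq_sum_range, Polynomial.eval_eq_sum_range,
        ← Finset.sum_sub_distrib]
      apply Finset.sum_eq_zero
      intro i _
      rw [← mul_sub]
      obtain ⟨t, ht⟩ := hdvd.trans (sub_dvd_pow_sub_pow (b : ℤ) (a : ℤ) i)
      have hcast : (b : R) ^ i - (a : R) ^ i = ((M * t : ℤ) : R) := by
        rw [← ht]; push_cast; ring
      rw [hcast, mul_comm, ← zsmul_eq_mul, mul_comm M t, mul_smul, hMann, smul_zero]
    exact sub_eq_zero.mp h1
  intro n
  obtain ⟨B, hB⟩ := hf.bddAbove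
  have hpos : 1 ≤ M.natAbs := Nat.one_le_iff_ne_zero.mpr (Int.natAbs_ne_zero.mpr hM0)
  set b := n + M.natAbs * (B + 1) with hb
  have hbad : p.eval (b : R) = 0 := by
    by_contra h
    have hle : b ≤ B := hB h
    rw [hb] at hle; nlinarith
  have hdvd : M ∣ (b : ℤ) - (n : ℤ) := by
    have h1 : (b : ℤ) - (n : ℤ) = (M.natAbs : ℤ) * (B + 1) := by
      rw [hb]; push_cast; ring
    rw [h1]
    exact Dvd.dvd.mul_right (Int.dvd_natAbs.mpr dvd_rfl) _
  rw [← key n b hdvd, hbad]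
end

section
/- Let R be a commutative ring and let p be a polynomial with coefficients in R. If p(n) = 0 for every natural number n, then there exists a positive integer N such that N·p = 0 in R[X]; in particular, every coefficient of p is torsion. -/
open Polynomial

private lemma taylor_coeff_top' {R : Type*} [CommRing R] (p : R[X]) {k : ℕ}
    (hk : p.natDegree ≤ k) : (Polynomial.taylor (1 : R) p).coeff k = p.coeff k := by
  rw [taylor_coeff]
  have hC : hasseDeriv k p = C (p.coeff k) := by
    ext i
    rw [hasseDeriv_coeff, coeff_C]
    cases i with
    | zero => simp
    | succ j =>
        have h0 : p.coeff (j + 1 + k) = 0 :=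
          coeff_eq_zero_of_natDegree_lt (by omega)
        simp [h0]
  simp [hC]

private lemma taylor_coeff_pen' {R : Type*} [CommRing R] (p : R[X]) {n : ℕ}
    (hp : p.natDegree ≤ n + 1) :
    (Polynomial.taylor (1 : R) p).coeff n
      = p.coeff n + ((n : R) + 1) * p.coeff (n + 1) := by
  rw [taylor_coeff]
  have hC : hasseDeriv n p
      = C (p.coeff n) + monomial 1 (((n : R) + 1) * p.coeff (n + 1)) := by
    ext i
    rw [hasseDeriv_coeff]
    match i with
    | 0 => simp
    | 1 =>
        simp only [coeff_add, coeff_C, coeff_monomial, if_neg one_ne_zero]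
        have : (1 + n).choose n = n + 1 := by
          rw [Nat.add_comm, Nat.choose_succ_self_right]
        rw [this]
        push_cast
        simp [add_comm 1 n]
    | (j + 2) =>
        have h0 : p.coeff (j + 2 + n) = 0 :=
          coeff_eq_zero_of_natDegree_lt (by omega)
        simp [h0, coeff_monomial]
  rw [hC]
  simp

private lemma aux_stmt8 {R : Type*} [CommRing R] :
    ∀ n : ℕ, ∀ p : R[X], p.natDegree ≤ n → (∀ k : ℕ, p.eval (k : R) = 0) →
      ∃ N : ℕ, 0 < N ∧ (N : ℤ) • p = 0 := by
  intro n
  induction n with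
  | zero =>
    intro p hd hev
    refine ⟨1, one_pos, ?_⟩
    have hpc := Polynomial.eq_C_of_natDegree_le_zero hd
    have h0 := hev 0
    rw [Nat.cast_zero, ← coeff_zero_eq_eval_zero] at h0
    rw [hpc, h0]
    simp
  | succ n ih =>
    intro p hd hev
    set q : R[X] := Polynomial.taylor (1 : R) p - p with hq
    have hqd : q.natDegree ≤ n := by
      rw [natDegree_le_iff_coeff_eq_zero]
      intro k hk
      have hk' : p.natDegree ≤ k := le_trans hd hk
      rw [hq, coeff_sub, taylor_coeff_top' p hk', sub_self]
    have hqe : ∀ k : ℕ, q.eval (k : R) = 0 := by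
      intro k
      have h1 := hev (k + 1)
      push_cast at h1
      rw [hq, eval_sub, taylor_eval, h1, hev k, sub_zero]
    obtain ⟨M, hM, hMq⟩ := ih q hqd hqe
    have hkill : ((M * (n + 1) : ℕ) : ℤ) • p.coeff (n + 1) = 0 := by
      have hcoeff := congrArg (fun r : R[X] => r.coeff n) hMq
      simp only [coeff_smul, coeff_zero, hq, coeff_sub] at hcoeff
      rw [taylor_coeff_pen' p hd] at hcoeff
      have h2 : (M : ℤ) • (((n : R) + 1) * p.coeff (n + 1)) = 0 := by
        rw [add_sub_cancel_left] at hcoeff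
        exact hcoeff
      push_cast
      rw [zsmul_eq_mul] at h2 ⊢
      push_cast at h2 ⊢
      linear_combination h2
    set t : R[X] := ((M * (n + 1) : ℕ) : ℤ) • p with ht
    have htd : t.natDegree ≤ n := by
      rw [natDegree_le_iff_coeff_eq_zero]
      intro k hk
      rw [ht, coeff_smul]
      by_cases hk1 : k = n + 1
      · rw [hk1]; exact hkill
      · have : p.coeff k = 0 := coeff_eq_zero_of_natDegree_lt (by omega)
        rw [this, smul_zero]
    have hte : ∀ k : ℕ, t.eval (k : R) = 0 := by
      intro k
      rw [ht]
      have : (((M * (n + 1) : ℕ) : ℤ) • p).eval (k : R)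
          = ((M * (n + 1) : ℕ) : ℤ) • p.eval (k : R) := by
        simp [zsmul_eq_mul]
      rw [this, hev k, smul_zero]
    obtain ⟨K, hK, hKt⟩ := ih t htd hte
    refine ⟨K * (M * (n + 1)), by positivity, ?_⟩
    rw [ht] at hKt
    rw [← hKt, smul_smul]
    push_cast
    ring_nf

/-- If a polynomial `p ∈ R[X]` vanishes at every natural number, then some positive
integer `N` annihilates `p`; in particular, every coefficient of `p` is torsion. -/
theorem stmt8 {R : Type*} [CommRing R] (p : Polynomial R)
    (h : ∀ n : ℕ, p.eval (n : R) = 0) :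
    (∃ N : ℕ, 0 < N ∧ (N : ℤ) • p = 0) ∧
      ∀ i : ℕ, ∃ N : ℤ, N ≠ 0 ∧ N • p.coeff i = 0 := by
  obtain ⟨N, hN, hNp⟩ := aux_stmt8 p.natDegree p le_rfl h
  refine ⟨⟨N, hN, hNp⟩, fun i => ⟨N, by exact_mod_cast hN.ne', ?_⟩⟩
  have := congrArg (fun r : Polynomial R => r.coeff i) hNp
  simpa [Polynomial.coeff_smul] using this
end

section
/- Let q be a real number with q > 1, let S ⊆ ℕ × ℤ be a finite set, and let c_{a,b} ∈ ℝ for each (a,b) ∈ S. Define f : ℕ → ℝ by f(n) = Σ_{(a,b)∈S} c_{a,b} · n^a · q^{b·n}. Then the family (f(n))_{n∈ℕ} is summable (equivalently, Σ_{n∈ℕ} |f(n)| < ∞) if and only if c_{a,b} = 0 for every (a,b) ∈ S with b ≥ 0. -/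
/-!
Terms with `b < 0` are dominated by geometric series, so they are always summable. Conversely,
if the sum is summable then so is its part with `b ≥ 0`, which therefore tends to `0`. Ordering
the terms `n ^ a * q ^ (b * n)` lexicographically by `(b, a)`, each one is `o` of the next,
and the largest one is at least `1`; so the coefficient of the largest term must vanish, and
removing that term one proceeds by induction.
-/

open Filter Topology Asymptotics

noncomputable def polyExpTerm (q : ℝ) (ab : ℕ × ℤ) (n : ℕ) : ℝ :=
  (n : ℝ) ^ ab.1 * q ^ (ab.2 * (n : ℤ))

lemma isLittleO_of_tendsto_zero_of_eventually_one_le {α : Type*} {l : Filter α} {f g : α → ℝ}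
    (hf : Tendsto f l (𝓝 0)) (hg : ∀ᶠ x in l, 1 ≤ g x) : f =o[l] g :=
  (isLittleO_one_iff ℝ).2 hf |>.trans_isBigO <| IsBigO.of_bound 1 <| by
    filter_upwards [hg] with x hx
    simpa [abs_of_nonneg (zero_le_one.trans hx)] using hx

lemma eventually_one_le_polyExpTerm {q : ℝ} (hq : 1 ≤ q) {ab : ℕ × ℤ} (hb : 0 ≤ ab.2) :
    ∀ᶠ n in atTop, 1 ≤ polyExpTerm q ab n := by
  filter_upwards [eventually_ge_atTop 1] with n hn
  exact one_le_mul_of_one_le_of_one_le (one_le_pow₀ (mod_cast hn))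
    (one_le_zpow₀ hq (mul_nonneg hb n.cast_nonneg))

lemma summable_polyExpTerm {q : ℝ} (hq : 1 < q) {ab : ℕ × ℤ} (hb : ab.2 < 0) :
    Summable (polyExpTerm q ab) := by
  have hr : ‖q ^ ab.2‖ < 1 := by
    rw [Real.norm_of_nonneg (zpow_pos (by positivity) _).le]
    exact zpow_lt_one_of_neg₀ hq hb
  refine (summable_pow_mul_geometric_of_norm_lt_one ab.1 hr).congr fun n => ?_
  rw [polyExpTerm, ← zpow_natCast (q ^ ab.2), ← zpow_mul]

lemma polyExpTerm_eq_mul_zpow {q : ℝ} (hq : 0 < q) (a : ℕ) (b B : ℤ) (n : ℕ) :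
    polyExpTerm q (a, b) n = (n : ℝ) ^ a * (q ^ (b - B)) ^ n * q ^ (B * (n : ℤ)) := by
  rw [polyExpTerm, mul_assoc, ← zpow_natCast (q ^ (b - B)), ← zpow_mul, ← zpow_add₀ hq.ne']
  ring_nf

lemma polyExpTerm_isLittleO {q : ℝ} (hq : 1 < q) {x y : ℕ × ℤ}
    (hxy : toLex (x.2, x.1) < toLex (y.2, y.1)) :
    polyExpTerm q x =o[atTop] polyExpTerm q y := by
  obtain ⟨a, b⟩ := x
  obtain ⟨A, B⟩ := y
  have hq0 : 0 < q := by positivity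
  have hfactor : (fun n : ℕ => (n : ℝ) ^ a * (q ^ (b - B)) ^ n) =o[atTop]
      fun n => (n : ℝ) ^ A := by
    rcases Prod.Lex.lt_iff.1 hxy with (hb : b < B) | ⟨(rfl : b = B), (ha : a < A)⟩
    · refine isLittleO_of_tendsto_zero_of_eventually_one_le ?_ ?_
      · exact tendsto_pow_const_mul_const_pow_of_lt_one a (zpow_pos hq0 (b - B)).le
          (zpow_lt_one_of_neg₀ hq (sub_neg.2 hb))
      · filter_upwards [eventually_ge_atTop 1] with n hn
        exact one_le_pow₀ (mod_cast hn)
    · simp only [sub_self, zpow_zero, one_pow, mul_one]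
      exact (isLittleO_pow_pow_atTop_of_lt ha).comp_tendsto tendsto_natCast_atTop_atTop
  rw [show polyExpTerm q (a, b) = fun n : ℕ => (n : ℝ) ^ a * (q ^ (b - B)) ^ n * q ^ (B * (n : ℤ))
    from funext (polyExpTerm_eq_mul_zpow hq0 a b B)]
  exact hfactor.mul_isBigO (isBigO_refl _ _)

lemma eq_zero_of_tendsto_sum_polyExpTerm {q : ℝ} (hq : 1 < q) (c : ℕ × ℤ → ℝ)
    (T : Finset (ℕ × ℤ)) (hT : ∀ x ∈ T, 0 ≤ x.2)
    (hlim : Tendsto (fun n => ∑ x ∈ T, c x * polyExpTerm q x n) atTop (𝓝 0)) :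
    ∀ x ∈ T, c x = 0 := by
  classical
  induction T using Finset.induction_on_max_value (fun x : ℕ × ℤ => toLex (x.2, x.1)) with
  | empty => simp
  | insert m T hmT hmax ih =>
    have hm_large := eventually_one_le_polyExpTerm hq.le (hT m (Finset.mem_insert_self m T))
    have hlower : (fun n => ∑ x ∈ T, c x * polyExpTerm q x n) =o[atTop] polyExpTerm q m := by
      refine IsLittleO.fun_sum fun x hx => (polyExpTerm_isLittleO hq ?_).const_mul_left (c x)
      refine (hmax x hx).lt_of_ne fun hxm => hmT ?_
      obtain ⟨h2, h1⟩ := Prod.ext_iff.1 (toLex.injective hxm)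
      exact Prod.ext h1 h2 ▸ hx
    have hcm : c m = 0 := by
      by_contra hne
      have hlead : (fun n => c m * polyExpTerm q m n) =o[atTop] polyExpTerm q m := by
        simpa [Finset.sum_insert hmT] using
          (isLittleO_of_tendsto_zero_of_eventually_one_le hlim hm_large).sub hlower
      refine isLittleO_irrefl ?_ ((isLittleO_const_mul_left_iff hne).1 hlead)
      exact (hm_large.mono fun n hn => (zero_lt_one.trans_le hn).ne').frequently
    have hlim' : Tendsto (fun n => ∑ x ∈ T, c x * polyExpTerm q x n) atTop (𝓝 0) := by
      simpa [Finset.sum_insert hmT, hcm] using hlim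
    intro x hx
    rcases Finset.mem_insert.1 hx with rfl | hx
    · exact hcm
    · exact ih (fun y hy => hT y (Finset.mem_insert_of_mem hy)) hlim' x hx

/-- Real specialization of the corrected Proposition 4.2 in one variable:
`f(n) = ∑ (a,b) ∈ S, c (a,b) * n^a * q^(b*n)` is summable over `ℕ` if and only if the
coefficients of all the terms with `b ≥ 0` vanish. -/
theorem stmt11 (q : ℝ) (hq : 1 < q) (S : Finset (ℕ × ℤ)) (c : ℕ × ℤ → ℝ) :
    Summable (fun n : ℕ =>
        ∑ ab ∈ S, c ab * (n : ℝ) ^ ab.1 * q ^ (ab.2 * (n : ℤ))) ↔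
      ∀ ab ∈ S, 0 ≤ ab.2 → c ab = 0 := by
  simp only [mul_assoc, ← polyExpTerm.eq_def]
  constructor
  · intro hsum ab hab hb
    have hneg : Summable fun n =>
        ∑ x ∈ S.filter (fun x => ¬ 0 ≤ x.2), c x * polyExpTerm q x n :=
      summable_sum fun x hx =>
        (summable_polyExpTerm hq (not_le.1 (Finset.mem_filter.1 hx).2)).mul_left (c x)
    have hnonneg : Tendsto (fun n => ∑ x ∈ S.filter (fun x => 0 ≤ x.2), c x * polyExpTerm q x n)
        atTop (𝓝 0) := by
      simpa [← Finset.sum_filter_add_sum_filter_not S (fun x => 0 ≤ x.2)] using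
        (hsum.sub hneg).tendsto_atTop_zero
    exact eq_zero_of_tendsto_sum_polyExpTerm hq c _ (fun x hx => (Finset.mem_filter.1 hx).2)
      hnonneg ab (Finset.mem_filter.2 ⟨hab, hb⟩)
  · intro h
    refine summable_sum fun ab hab => ?_
    rcases lt_or_ge ab.2 0 with hb | hb
    · exact (summable_polyExpTerm hq hb).mul_left (c ab)
    · simp [h ab hab hb, summable_zero]
end
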